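/- arXiv:2405.19095 — 6 statements merged into one kernel-verified Lean document; each statement's English description precedes it below -/
import Mathlib

section
/- For any typed combinatory algebra A, the category of assemblies over A is equivalent to the category of assemblies over the augmented TCA A¹ with a unit type; in particular, any assembly over A¹ with realizer type 1 is isomorphic in Asm(A¹) to an assembly whose realizer type lies in the original type system. -/
open CategoryTheory

/-- A type system: a nonempty set of types closed under an arrow operation. -/
structure TypeSystem where
  T : Type
  nonempty : Nonempty T
  arr : T → T → T

/-- A typed combinatory algebra (TCA) over a type system. -/
structure TCA (S : TypeSystem) where
  El : S.T → Type
  el_nonempty : ∀ t, Nonempty (El t)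
  app : ∀ {a b : S.T}, El (S.arr a b) → El a → El b
  k : ∀ a b : S.T, El (S.arr a (S.arr b a))
  s : ∀ a b c : S.T,
    El (S.arr (S.arr a (S.arr b c)) (S.arr (S.arr a b) (S.arr a c)))
  k_spec : ∀ (a b : S.T) (x : El a) (y : El b), app (app (k a b) x) y = x
  s_spec : ∀ (a b c : S.T) (f : El (S.arr a (S.arr b c)))
    (g : El (S.arr a b)) (x : El a),
    app (app (app (s a b c) f) g) x = app (app f x) (app g x)

namespace TCA

variable {S : TypeSystem} (A : TCA S)

/-- The typed identity combinator `I = s k k`. -/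
def I (a : S.T) : A.El (S.arr a a) :=
  A.app (A.app (A.s a (S.arr a a) a) (A.k a (S.arr a a))) (A.k a a)

theorem I_spec (a : S.T) (x : A.El a) : A.app (A.I a) x = x := by
  simp [TCA.I, A.s_spec, A.k_spec]

/-- The typed composition combinator `B e' e = λx. e'(e x)`, namely
`s (k e') e`. -/
def B {a b c : S.T} (e' : A.El (S.arr b c)) (e : A.El (S.arr a b)) :
    A.El (S.arr a c) :=
  A.app (A.app (A.s a b c) (A.app (A.k (S.arr b c) a) e')) e

theorem B_spec {a b c : S.T} (e' : A.El (S.arr b c)) (e : A.El (S.arr a b))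
    (x : A.El a) : A.app (A.B e' e) x = A.app e' (A.app e x) := by
  simp [TCA.B, A.s_spec, A.k_spec]

end TCA

/-- An assembly over a TCA. -/
structure Asm {S : TypeSystem} (A : TCA S) where
  X : Type
  rt : S.T
  rel : A.El rt → X → Prop
  total : ∀ x, ∃ a, rel a x

instance {S : TypeSystem} (A : TCA S) : Category (Asm A) where
  Hom X Y := {f : X.X → Y.X // ∃ e : A.El (S.arr X.rt Y.rt),
    ∀ (x : X.X) (a : A.El X.rt), X.rel a x → Y.rel (A.app e a) (f x)}
  id X := ⟨id, A.I X.rt, fun x a h => by rw [A.I_spec]; exact h⟩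
  comp {X Y Z} f g := ⟨g.1 ∘ f.1, by
    obtain ⟨e, he⟩ := f.2
    obtain ⟨e', he'⟩ := g.2
    exact ⟨A.B e' e, fun x a h => by rw [A.B_spec]; exact he' _ _ (he _ _ h)⟩⟩
  id_comp f := rfl
  comp_id f := rfl
  assoc f g h := rfl

/-- The arrow of the augmented type system `T¹ = T ∪ {1}` (the unit type is
`none`): `1 → A := A` and `A → 1 := 1`. -/
def augArr (S : TypeSystem) : Option S.T → Option S.T → Option S.T
  | none, t => t
  | some _, none => none
  | some a, some b => some (S.arr a b)

/-- The augmented type system `T¹ = T ∪ {1}`. -/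
def TypeSystem.augment (S : TypeSystem) : TypeSystem :=
  ⟨Option S.T, ⟨none⟩, augArr S⟩

/-!
Since `A¹` agrees with `A` on the types of `T`, an assembly over `A` is an assembly over `A¹`
with the same realizers, and morphisms are tracked by the same elements; this inclusion is
fully faithful. It is essentially surjective because an assembly whose realizer type is `1`
carries no information: its only realizer realizes every element, so it is isomorphic to the
codiscrete assembly on its carrier over any type of `T`.
-/

namespace Asm

variable {S : TypeSystem} {A : TCA S}

def isoOfEquiv {X Y : Asm A} (f : X.X ≃ Y.X)
    (hf : ∃ e : A.El (S.arr X.rt Y.rt), ∀ x a, X.rel a x → Y.rel (A.app e a) (f x))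
    (hg : ∃ e : A.El (S.arr Y.rt X.rt), ∀ y a, Y.rel a y → X.rel (A.app e a) (f.symm y)) :
    X ≅ Y where
  hom := ⟨f, hf⟩
  inv := ⟨f.symm, hg⟩
  hom_inv_id := Subtype.ext (funext f.symm_apply_apply)
  inv_hom_id := Subtype.ext (funext f.apply_symm_apply)

variable (A) in
def codiscrete (X : Type) (t : S.T) : Asm A :=
  ⟨X, t, fun _ _ => True, fun _ => ⟨Classical.choice (A.el_nonempty t), trivial⟩⟩

def isoCodiscreteOfSubsingleton (X : Asm A) (hX : ∀ a b : A.El X.rt, a = b) (t : S.T) :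
    X ≅ codiscrete A X.X t :=
  isoOfEquiv (Equiv.refl _)
    ⟨Classical.choice (A.el_nonempty _), fun _ _ _ => trivial⟩
    ⟨Classical.choice (A.el_nonempty _), fun x a _ => by
      obtain ⟨b, hb⟩ := X.total x
      rwa [hX (A.app _ a) b]⟩

end Asm

section Augmentation

variable {S : TypeSystem} {A : TCA S} {B : TCA S.augment}
  (hEl : ∀ t : S.T, B.El (some t) = A.El t)
  (happ : ∀ (t u : S.T) (f : B.El (S.augment.arr (some t) (some u)))
    (f' : A.El (S.arr t u)) (x : B.El (some t)) (x' : A.El t),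
    HEq f f' → HEq x x' → HEq (B.app f x) (A.app f' x'))

-- `S.augment.T` only unfolds to `Option S.T` at default transparency, so `rw` cannot see through
-- the casts below; the proofs go through `change` and `▸` instead.
include happ in
theorem cast_app_augment {t u : S.T} {f : B.El (S.augment.arr (some t) (some u))}
    {f' : A.El (S.arr t u)} (hf : HEq f f') {b : B.El (some t)} {b' : A.El t}
    (hb : HEq b b') : cast (hEl u) (B.app f b) = A.app f' b' :=
  eq_of_heq <| (cast_heq _ _).trans <| happ t u f f' b b' hf hb

def Asm.augment (X : Asm A) : Asm B :=
  ⟨X.X, some X.rt, fun b x => X.rel (cast (hEl X.rt) b) x, fun x => by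
    obtain ⟨a, ha⟩ := X.total x
    exact ⟨cast (hEl X.rt).symm a, by rwa [cast_cast, cast_eq]⟩⟩

theorem Asm.augment_rel_cast_symm {X : Asm A} {a : A.El X.rt} {x : X.X} :
    (Asm.augment hEl X).rel (cast (hEl X.rt).symm a) x ↔ X.rel a x := by
  change X.rel (cast _ (cast _ a)) x ↔ _
  rw [cast_cast, cast_eq]

def Asm.restrict (X : Type) (t : S.T) (rel : B.El (some t) → X → Prop)
    (total : ∀ x, ∃ b, rel b x) : Asm A :=
  ⟨X, t, fun a x => rel (cast (hEl t).symm a) x, fun x => by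
    obtain ⟨b, hb⟩ := total x
    exact ⟨cast (hEl t) b, by rwa [cast_cast, cast_eq]⟩⟩

theorem Asm.augment_restrict (X : Type) (t : S.T) (rel : B.El (some t) → X → Prop)
    (total : ∀ x, ∃ b, rel b x) :
    Asm.augment hEl (Asm.restrict hEl X t rel total) = ⟨X, some t, rel, total⟩ := by
  change Asm.mk _ _ _ _ = _
  congr
  funext b x
  exact congrArg (rel · x) ((cast_cast _ _ b).trans (cast_eq _ b))

include happ in
def augmentFunctor : Asm A ⥤ Asm B where
  obj := Asm.augment hEl
  map {X Y} f := ⟨f.1, by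
    obtain ⟨e, he⟩ := f.2
    refine ⟨cast (hEl (S.arr X.rt Y.rt)).symm e, fun x b hb => ?_⟩
    change Y.rel (cast (hEl Y.rt) _) _
    exact (cast_app_augment hEl happ (cast_heq _ e) (cast_heq _ b).symm).symm ▸ he x _ hb⟩

def augmentFunctorFullyFaithful : (augmentFunctor hEl happ).FullyFaithful where
  preimage {X Y} g := ⟨g.1, by
    obtain ⟨e, he⟩ := g.2
    refine ⟨cast (hEl (S.arr X.rt Y.rt)) e, fun x a ha => ?_⟩
    have hY := he x _ ((Asm.augment_rel_cast_symm hEl).2 ha)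
    change Y.rel (cast (hEl Y.rt) _) _ at hY
    exact cast_app_augment hEl happ (cast_heq _ e).symm (cast_heq _ a) ▸ hY⟩

theorem augmentFunctor_essSurj (hsub : ∀ x y : B.El none, x = y) :
    (augmentFunctor hEl happ).EssSurj where
  mem_essImage := by
    rintro ⟨X, rt, rel, total⟩
    cases rt with
    | none =>
      let t := Classical.choice S.nonempty
      exact ⟨Asm.codiscrete A X t,
        ⟨(Asm.isoCodiscreteOfSubsingleton (A := B) ⟨X, none, rel, total⟩ hsub (some t)).symm⟩⟩
    | some t =>
      exact ⟨Asm.restrict hEl X t rel total, ⟨eqToIso (Asm.augment_restrict hEl X t rel total)⟩⟩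

end Augmentation

theorem asm_augment_equivalence_general (S : TypeSystem) (A : TCA S)
    (B : TCA S.augment)
    -- `B` is the augmentation `A¹` of `A`:
    (hEl : ∀ t : S.T, B.El (some t) = A.El t)
    (happ : ∀ (t u : S.T) (f : B.El (S.augment.arr (some t) (some u)))
      (f' : A.El (S.arr t u)) (x : B.El (some t)) (x' : A.El t),
      HEq f f' → HEq x x' → HEq (B.app f x) (A.app f' x'))
    (hsub : ∀ x y : B.El none, x = y) :
    Nonempty (Asm A ≌ Asm B) ∧
      ∀ X : Asm B, X.rt = none →
        ∃ Y : Asm B, (∃ t : S.T, Y.rt = some t) ∧ Nonempty (X ≅ Y) := by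
  have hF := augmentFunctorFullyFaithful hEl happ
  have : (augmentFunctor hEl happ).IsEquivalence :=
    ⟨hF.faithful, hF.full, augmentFunctor_essSurj hEl happ hsub⟩
  refine ⟨⟨(augmentFunctor hEl happ).asEquivalence⟩, fun X hX => ?_⟩
  let t := Classical.choice S.nonempty
  exact ⟨Asm.codiscrete B X.X (some t), ⟨t, rfl⟩,
    ⟨X.isoCodiscreteOfSubsingleton (hX ▸ hsub) (some t)⟩⟩

/-- For a typed combinatory algebra `A`, the category of assemblies over `A`
is equivalent to the category of assemblies over the augmented TCA `A¹` with
a unit type; moreover, any assembly over `A¹` whose realizer type is the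
unit type `1` is isomorphic in `Asm(A¹)` to an assembly whose realizer type
lies in the original type system. -/
theorem asm_augment_equivalence (S : TypeSystem) (A : TCA S)
    (B : TCA S.augment)
    -- `B` is the augmentation `A¹` of `A`:
    (hEl : ∀ t : S.T, B.El (some t) = A.El t)
    (happ : ∀ (t u : S.T) (f : B.El (S.augment.arr (some t) (some u)))
      (f' : A.El (S.arr t u)) (x : B.El (some t)) (x' : A.El t),
      HEq f f' → HEq x x' → HEq (B.app f x) (A.app f' x'))
    (hsub : ∀ x y : B.El none, x = y)
    (hu1 : ∀ (t : Option S.T) (f : B.El (S.augment.arr none t))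
      (u : B.El none), B.app f u = f)
    (hu2 : ∀ (t : Option S.T) (g : B.El (S.augment.arr t none))
      (x : B.El t) (v : B.El none), B.app g x = v) :
    Nonempty (Asm A ≌ Asm B) ∧
      ∀ X : Asm B, X.rt = none →
        ∃ Y : Asm B, (∃ t : S.T, Y.rt = some t) ∧ Nonempty (X ≅ Y) :=
  asm_augment_equivalence_general S A B hEl happ hsub
end

section
/- In the category of groupoids, the diagram consisting of the terminal groupoid I₀, the walking isomorphism I₁ (two objects 0,1 and an isomorphism i : 0 → 1), the groupoid I₂ (three objects 0,1,2 with exactly one morphism in each hom-set), and I₃ (four objects, one morphism in each hom-set), together with the endpoint functors 0,1 : I₀ → I₁, the unique functor * : I₁ → I₀, the swap functor σ : I₁ → I₁ sending i to i⁻¹, the inclusion functors i₀, i₁ : I₁ → I₂, the cocomposition functor 2 : I₁ → I₂ sending i to i₁∘i₀, and the functors j₀, j₁ : I₂ → I₃, forms an interval (internal cogroupoid): both required squares are pushouts in Gpd and all cogroupoid axioms (counit, coassociativity, coinverse laws) hold. -/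
/-!
All groupoids in sight are chaotic, so a functor `Ch (n + 1) ⥤ X` into a groupoid is determined by
its objects and by the images of the steps `i ⟶ i + 1`, and any choice of objects and steps
extends to such a functor. Each of the two squares glues two chaotic groupoids along a chaotic
subgroupoid with at least one object, and every step of the glued groupoid is a step of one of
the two pieces: this gives both the descent functor and its uniqueness. The remaining equations
are between functors into chaotic groupoids, hence are checked on objects.
-/

open CategoryTheory CategoryTheory.Limits

/-- The chaotic (indiscrete) groupoid on `n` objects: exactly one morphism
in each hom-set.  `Ch 1` is the terminal groupoid `I₀`, `Ch 2` is the
walking isomorphism `I₁`, `Ch 3` is `I₂` and `Ch 4` is `I₃`. -/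
def Ch (n : ℕ) := Fin n

instance (n : ℕ) : Groupoid (Ch n) where
  Hom _ _ := PUnit
  id _ := ⟨⟩
  comp _ _ := ⟨⟩
  inv _ := ⟨⟩
  id_comp _ := rfl
  comp_id _ := rfl
  assoc _ _ _ := rfl
  inv_comp _ := rfl
  comp_inv _ := rfl

/-- The functor between chaotic groupoids determined by a function on
objects. -/
def chF {m n : ℕ} (f : Fin m → Fin n) : Ch m ⥤ Ch n where
  obj := f
  map _ := ⟨⟩
  map_id _ := rfl
  map_comp _ _ := rfl

namespace GpdInterval

def I0 : Grpd := Grpd.of (Ch 1)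
def I1 : Grpd := Grpd.of (Ch 2)
def I2 : Grpd := Grpd.of (Ch 3)
def I3 : Grpd := Grpd.of (Ch 4)

/-- The endpoint `0 : I₀ → I₁`. -/
def zero : I0 ⟶ I1 := chF ![0]
/-- The endpoint `1 : I₀ → I₁`. -/
def one : I0 ⟶ I1 := chF ![1]
/-- The coidentity `* : I₁ → I₀`. -/
def star : I1 ⟶ I0 := chF ![0, 0]
/-- The coinverse `σ : I₁ → I₁`, sending `i` to `i⁻¹`. -/
def sigma : I1 ⟶ I1 := chF ![1, 0]
/-- The inclusion `i₀ : I₁ → I₂`. -/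
def i0 : I1 ⟶ I2 := chF ![0, 1]
/-- The inclusion `i₁ : I₁ → I₂`. -/
def i1 : I1 ⟶ I2 := chF ![1, 2]
/-- The cocomposition `2 : I₁ → I₂`, sending `i` to `i₁ ∘ i₀`. -/
def two : I1 ⟶ I2 := chF ![0, 2]
/-- `j₀ : I₂ → I₃`. -/
def j0 : I2 ⟶ I3 := chF ![0, 1, 2]
/-- `j₁ : I₂ → I₃`. -/
def j1 : I2 ⟶ I3 := chF ![1, 2, 3]

/-- The universal map `[id, 0∘*] : I₂ → I₁` (with `0∘*` along `i₀` and
`id` along `i₁`). -/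
def bCounitL : I2 ⟶ I1 := chF ![0, 0, 1]
/-- The universal map `[1∘*, id] : I₂ → I₁`. -/
def bCounitR : I2 ⟶ I1 := chF ![0, 1, 1]
/-- The universal map `[j₁∘2, j₀∘i₀] : I₂ → I₃`. -/
def bCoassocL : I2 ⟶ I3 := chF ![0, 1, 3]
/-- The universal map `[j₁∘i₁, j₀∘2] : I₂ → I₃`. -/
def bCoassocR : I2 ⟶ I3 := chF ![0, 2, 3]
/-- The universal map `[id, σ] : I₂ → I₁`. -/
def bCoinvL : I2 ⟶ I1 := chF ![1, 0, 1]
/-- The universal map `[σ, id] : I₂ → I₁`. -/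
def bCoinvR : I2 ⟶ I1 := chF ![0, 1, 0]

end GpdInterval

namespace Ch

variable {n : ℕ}

instance : Fintype (Ch n) := inferInstanceAs (Fintype (Fin n))

instance {i : ℕ} [NeZero n] : OfNat (Ch n) i := inferInstanceAs (OfNat (Fin n) i)

def hom (a b : Ch n) : a ⟶ b := ⟨⟩

@[simp] lemma hom_self (a : Ch n) : hom a a = 𝟙 a := rfl

@[simp] lemma hom_comp (a b c : Ch n) : hom a b ≫ hom b c = hom a c := rfl

lemma eq_hom {a b : Ch n} (f : a ⟶ b) : f = hom a b := rfl

lemma functor_ext {C : Type*} [Category C] {F G : C ⥤ Ch n} (h : ∀ a, F.obj a = G.obj a) :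
    F = G :=
  CategoryTheory.Functor.ext h fun _ _ _ => rfl

variable {X : Type*} [Groupoid X]

lemma ext_of_map_from {F G : Ch n ⥤ X} (z : Ch n) (hobj : ∀ a, F.obj a = G.obj a)
    (hmap : ∀ a, F.map (hom z a) ≍ G.map (hom z a)) : F = G :=
  CategoryTheory.Functor.ext hobj fun a b f => by
    rw [eq_hom f, ← cancel_epi (F.map (hom z a)), ← F.map_comp, hom_comp,
      (conj_eqToHom_iff_heq _ _ (hobj z) (hobj a)).2 (hmap a),
      (conj_eqToHom_iff_heq _ _ (hobj z) (hobj b)).2 (hmap b)]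
    simp [← G.map_comp_assoc]

lemma map_hom_self_heq {F G : Ch n ⥤ X} {a : Ch n} (h : F.obj a = G.obj a) :
    F.map (hom a a) ≍ G.map (hom a a) := by
  rw [hom_self, F.map_id, hom_self, G.map_id, h]

lemma ext_of_steps {F G : Ch (n + 1) ⥤ X} (hobj : ∀ a, F.obj a = G.obj a)
    (hstep : ∀ i : Fin n, F.map (hom i.castSucc i.succ) ≍ G.map (hom i.castSucc i.succ)) :
    F = G := by
  refine ext_of_map_from 0 hobj fun a => ?_
  induction a using Fin.induction with
  | zero => exact map_hom_self_heq (hobj 0)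
  | succ i ih => exact Functor.map_comp_heq (hobj _) (hobj _) (hobj _) ih (hstep i)

section Lift

variable (obj : Fin (n + 1) → X) (step : ∀ i : Fin n, obj i.castSucc ⟶ obj i.succ)

noncomputable def pathFromZero : ∀ a, obj 0 ⟶ obj a :=
  Fin.induction (𝟙 _) fun i p => p ≫ step i

noncomputable def lift : Ch (n + 1) ⥤ X where
  obj := obj
  map {a b} _ := inv (pathFromZero obj step a) ≫ pathFromZero obj step b
  map_id _ := by simp
  map_comp _ _ := by simp

lemma lift_map_step (i : Fin n) : (lift obj step).map (hom i.castSucc i.succ) = step i := by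
  simp only [lift, pathFromZero, Fin.induction_succ]
  exact IsIso.inv_hom_id_assoc _ _

end Lift

end Ch

namespace GpdInterval

def isTerminalI0 : IsTerminal I0 :=
  IsTerminal.ofUniqueHom (fun X => (Functor.const X).obj (0 : Ch 1))
    fun _ _ => Ch.functor_ext fun _ => Subsingleton.elim (α := Fin 1) _ _

lemma zero_comp_i1 : zero ≫ i1 = one ≫ i0 :=
  Ch.functor_ext fun (a : Ch 1) => by fin_cases a; rfl

lemma i1_comp_j0 : i1 ≫ j0 = i0 ≫ j1 :=
  Ch.functor_ext fun (a : Ch 2) => by fin_cases a <;> rfl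

lemma hom_ext_of_i0_i1 {X : Grpd} {F G : I2 ⟶ X} (h₀ : i0 ≫ F = i0 ≫ G)
    (h₁ : i1 ≫ F = i1 ≫ G) : F = G := by
  refine Ch.ext_of_steps (fun a => ?_) fun i => ?_
  · fin_cases a
    · exact Functor.congr_obj h₀ (0 : Ch 2)
    · exact Functor.congr_obj h₀ (1 : Ch 2)
    · exact Functor.congr_obj h₁ (1 : Ch 2)
  · fin_cases i
    · exact Functor.hcongr_hom h₀ (Ch.hom 0 1)
    · exact Functor.hcongr_hom h₁ (Ch.hom 0 1)

lemma hom_ext_of_j0_j1 {X : Grpd} {F G : I3 ⟶ X} (h₀ : j0 ≫ F = j0 ≫ G)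
    (h₁ : j1 ≫ F = j1 ≫ G) : F = G := by
  refine Ch.ext_of_steps (fun a => ?_) fun i => ?_
  · fin_cases a
    · exact Functor.congr_obj h₀ (0 : Ch 3)
    · exact Functor.congr_obj h₀ (1 : Ch 3)
    · exact Functor.congr_obj h₀ (2 : Ch 3)
    · exact Functor.congr_obj h₁ (2 : Ch 3)
  · fin_cases i
    · exact Functor.hcongr_hom h₀ (Ch.hom 0 1)
    · exact Functor.hcongr_hom h₀ (Ch.hom 1 2)
    · exact Functor.hcongr_hom h₁ (Ch.hom 1 2)

section PushoutI2

variable (s : PushoutCocone zero one)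

lemma inl_obj_zero : s.inl.obj (0 : Ch 2) = s.inr.obj (1 : Ch 2) :=
  Functor.congr_obj s.condition (0 : Ch 1)

noncomputable def descI2 : I2 ⟶ s.pt :=
  Ch.lift ![s.inr.obj (0 : Ch 2), s.inr.obj (1 : Ch 2), s.inl.obj (1 : Ch 2)] fun
    | 0 => s.inr.map (Ch.hom 0 1)
    | 1 => eqToHom (inl_obj_zero s).symm ≫ s.inl.map (Ch.hom 0 1)

lemma i1_comp_descI2 : i1 ≫ descI2 s = s.inl := by
  refine Ch.ext_of_steps (fun a => ?_) fun i => ?_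
  · fin_cases a
    · exact (inl_obj_zero s).symm
    · rfl
  · fin_cases i
    -- the ascription fixes the hom universe of `Ch 3`, which `Ch.lift`'s `map` never mentions
    exact heq_of_eq_of_heq (Ch.lift_map_step _ _ 1 : (descI2 s).map _ = _) (eqToHom_comp_heq _ _)

lemma i0_comp_descI2 : i0 ≫ descI2 s = s.inr := by
  refine Ch.ext_of_steps (fun a => ?_) fun i => ?_
  · fin_cases a <;> rfl
  · fin_cases i
    exact heq_of_eq (Ch.lift_map_step _ _ 0 : (descI2 s).map _ = _)

end PushoutI2

theorem isPushout_zero_one : IsPushout zero one i1 i0 :=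
  IsPushout.of_isColimit <| PushoutCocone.IsColimit.mk zero_comp_i1 descI2 i1_comp_descI2
    i0_comp_descI2 fun s _ hl hr =>
      hom_ext_of_i0_i1 (hr.trans (i0_comp_descI2 s).symm) (hl.trans (i1_comp_descI2 s).symm)

section PushoutI3

variable (s : PushoutCocone i1 i0)

lemma inl_obj_two : s.inl.obj (2 : Ch 3) = s.inr.obj (1 : Ch 3) :=
  Functor.congr_obj s.condition (1 : Ch 2)

noncomputable def descI3 : I3 ⟶ s.pt :=
  Ch.lift
    ![s.inl.obj (0 : Ch 3), s.inl.obj (1 : Ch 3), s.inl.obj (2 : Ch 3), s.inr.obj (2 : Ch 3)] fun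
    | 0 => s.inl.map (Ch.hom 0 1)
    | 1 => s.inl.map (Ch.hom 1 2)
    | 2 => eqToHom (inl_obj_two s) ≫ s.inr.map (Ch.hom 1 2)

lemma j0_comp_descI3 : j0 ≫ descI3 s = s.inl := by
  refine Ch.ext_of_steps (fun a => ?_) fun i => ?_
  · fin_cases a <;> rfl
  · fin_cases i
    · exact heq_of_eq (Ch.lift_map_step _ _ 0 : (descI3 s).map _ = _)
    · exact heq_of_eq (Ch.lift_map_step _ _ 1 : (descI3 s).map _ = _)

lemma j1_comp_descI3 : j1 ≫ descI3 s = s.inr := by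
  refine Ch.ext_of_steps (fun a => ?_) fun i => ?_
  · fin_cases a
    · exact Functor.congr_obj s.condition (0 : Ch 2)
    · exact inl_obj_two s
    · rfl
  · fin_cases i
    · exact heq_of_eq_of_heq (Ch.lift_map_step _ _ 1 : (descI3 s).map _ = _)
        (Functor.hcongr_hom s.condition (Ch.hom 0 1))
    · exact heq_of_eq_of_heq (Ch.lift_map_step _ _ 2 : (descI3 s).map _ = _)
        (eqToHom_comp_heq _ _)

end PushoutI3

theorem isPushout_i1_i0 : IsPushout i1 i0 j0 j1 :=
  IsPushout.of_isColimit <| PushoutCocone.IsColimit.mk i1_comp_j0 descI3 j0_comp_descI3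
    j1_comp_descI3 fun s _ hl hr =>
      hom_ext_of_j0_j1 (hl.trans (j0_comp_descI3 s).symm) (hr.trans (j1_comp_descI3 s).symm)

end GpdInterval

open GpdInterval in
/-- In `Gpd`, the diagram consisting of the terminal groupoid `I₀`, the
walking isomorphism `I₁`, the chaotic groupoids `I₂` (three objects) and
`I₃` (four objects), together with the endpoint functors `0, 1`, the unique
functor `*`, the swap functor `σ`, the inclusions `i₀, i₁`, the
cocomposition `2` and the functors `j₀, j₁`, forms an interval (internal
cogroupoid): `I₀` is terminal, both required squares are pushouts, and all
the cogroupoid axioms (counit, coassociativity, coinverse laws) hold, the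
universal maps `[−,−]` out of the pushout `I₂` being characterized by
their restrictions along `i₀` and `i₁`. -/
theorem gpd_interval_is_cogroupoid :
    Nonempty (IsTerminal I0) ∧
    -- the two pushout squares
    IsPushout zero one i1 i0 ∧
    IsPushout i1 i0 j0 j1 ∧
    -- compatibility of the endpoints with cocomposition and coidentity
    zero ≫ two = zero ≫ i0 ∧
    one ≫ two = one ≫ i1 ∧
    zero ≫ star = 𝟙 I0 ∧
    one ≫ star = 𝟙 I0 ∧
    -- the coinverse axioms for σ
    zero ≫ sigma = one ∧
    one ≫ sigma = zero ∧
    sigma ≫ sigma = 𝟙 I1 ∧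
    -- [id, 0∘*] and [1∘*, id] are the universal maps they claim to be …
    i0 ≫ bCounitL = star ≫ zero ∧ i1 ≫ bCounitL = 𝟙 I1 ∧
    i0 ≫ bCounitR = 𝟙 I1 ∧ i1 ≫ bCounitR = star ≫ one ∧
    -- … and the counit axioms hold
    two ≫ bCounitL = 𝟙 I1 ∧
    two ≫ bCounitR = 𝟙 I1 ∧
    -- coassociativity
    i0 ≫ bCoassocL = i0 ≫ j0 ∧ i1 ≫ bCoassocL = two ≫ j1 ∧
    i0 ≫ bCoassocR = two ≫ j0 ∧ i1 ≫ bCoassocR = i1 ≫ j1 ∧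
    two ≫ bCoassocL = two ≫ bCoassocR ∧
    -- the coinverse laws
    i0 ≫ bCoinvL = sigma ∧ i1 ≫ bCoinvL = 𝟙 I1 ∧
    i0 ≫ bCoinvR = 𝟙 I1 ∧ i1 ≫ bCoinvR = sigma ∧
    two ≫ bCoinvL = star ≫ one ∧
    two ≫ bCoinvR = star ≫ zero := by
  refine ⟨⟨isTerminalI0⟩, isPushout_zero_one, isPushout_i1_i0, ?_⟩
  and_intros <;> exact Ch.functor_ext fun (a : Ch _) => by fin_cases a <;> rfl
end

section
/- Let R be a cartesian closed category with an interval I. For morphisms f, g : A → B, homotopies H : A × I₁ → B with dom(H) = f and cod(H) = g form, together with vertical composition, identity homotopies f∘π₁, and inverses H∘(A × σ), a groupoid structure on the hom-set R(A,B): vertical composition is associative with identities and inverses given as stated. -/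
open CategoryTheory CategoryTheory.Limits CategoryTheory.MonoidalCategory
open CategoryTheory.CartesianClosed CategoryTheory.MonoidalClosed

universe v u

/-- An interval *qua* internal cogroupoid in a category `R`. -/
structure CogroupoidInterval (R : Type u) [Category.{v} R] where
  I0 : R
  I1 : R
  I2 : R
  I3 : R
  isTerminal : IsTerminal I0
  src : I0 ⟶ I1
  tgt : I0 ⟶ I1
  star : I1 ⟶ I0
  sigma : I1 ⟶ I1
  i0 : I1 ⟶ I2
  i1 : I1 ⟶ I2
  two : I1 ⟶ I2
  j0 : I2 ⟶ I3
  j1 : I2 ⟶ I3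
  po : IsPushout src tgt i1 i0
  po2 : IsPushout i1 i0 j0 j1
  two_src : src ≫ two = src ≫ i0
  two_tgt : tgt ≫ two = tgt ≫ i1
  star_src : src ≫ star = 𝟙 I0
  star_tgt : tgt ≫ star = 𝟙 I0
  sigma_src : src ≫ sigma = tgt
  sigma_tgt : tgt ≫ sigma = src
  sigma_sigma : sigma ≫ sigma = 𝟙 I1
  w_counit_l : src ≫ 𝟙 I1 = tgt ≫ (star ≫ src)
  counit_l : two ≫ po.desc (𝟙 I1) (star ≫ src) w_counit_l = 𝟙 I1
  w_counit_r : src ≫ (star ≫ tgt) = tgt ≫ 𝟙 I1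
  counit_r : two ≫ po.desc (star ≫ tgt) (𝟙 I1) w_counit_r = 𝟙 I1
  w_coassoc_l : src ≫ (two ≫ j1) = tgt ≫ (i0 ≫ j0)
  w_coassoc_r : src ≫ (i1 ≫ j1) = tgt ≫ (two ≫ j0)
  coassoc : two ≫ po.desc (two ≫ j1) (i0 ≫ j0) w_coassoc_l =
    two ≫ po.desc (i1 ≫ j1) (two ≫ j0) w_coassoc_r
  w_coinv_l : src ≫ 𝟙 I1 = tgt ≫ sigma
  coinv_l : two ≫ po.desc (𝟙 I1) sigma w_coinv_l = star ≫ tgt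
  w_coinv_r : src ≫ sigma = tgt ≫ 𝟙 I1
  coinv_r : two ≫ po.desc sigma (𝟙 I1) w_coinv_r = star ≫ src

namespace CogroupoidInterval

variable {R : Type u} [Category.{v} R] [CartesianMonoidalCategory R]
  [MonoidalClosed R] (I : CogroupoidInterval R)

/-- `H : A ⊗ I₁ ⟶ B` is a homotopy from `f` to `g`. -/
def IsHtpy {A B : R} (H : A ⊗ I.I1 ⟶ B) (f g : A ⟶ B) : Prop :=
  CartesianMonoidalCategory.lift (𝟙 A) (I.isTerminal.from A ≫ I.src) ≫ H = f ∧
  CartesianMonoidalCategory.lift (𝟙 A) (I.isTerminal.from A ≫ I.tgt) ≫ H = g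

/-- The matching condition allowing two homotopies to be concatenated. -/
def Matches {A B : R} (H H' : A ⊗ I.I1 ⟶ B) : Prop :=
  I.src ≫ curry H' = I.tgt ≫ curry H

/-- Vertical composition `H' ∘ H := [H',H] ∘ (A × 2)` of homotopies, the
universal map `[H',H]` being obtained by transposing across the cartesian
closed structure and using the pushout `I₂`. -/
noncomputable def vcomp {A B : R} (H H' : A ⊗ I.I1 ⟶ B)
    (w : I.Matches H H') : A ⊗ I.I1 ⟶ B :=
  (A ◁ I.two) ≫ uncurry (I.po.desc (curry H') (curry H) w)

/-- The identity homotopy `f ∘ π₁` at `f`. -/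
def idHtpy {A B : R} (f : A ⟶ B) : A ⊗ I.I1 ⟶ B :=
  CartesianMonoidalCategory.fst A I.I1 ≫ f

/-- The inverse homotopy `H ∘ (A × σ)`. -/
def invHtpy {A B : R} (H : A ⊗ I.I1 ⟶ B) : A ⊗ I.I1 ⟶ B :=
  (A ◁ I.sigma) ≫ H

end CogroupoidInterval

/-!
Transposing across the exponential turns a homotopy `H : A × I₁ → B` into a map
`curry H : I₁ → B^A`, and vertical composition into precomposition of the copairing
`[curry H', curry H] : I₂ → B^A` with `2 : I₁ → I₂`. Each groupoid law for homotopies thereby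
becomes the corresponding cogroupoid axiom of `I` (coassociativity, counit, coinverse),
precomposed with a map out of `I₁`, `I₂` or `I₃`.
-/

namespace CategoryTheory.IsPushout

variable {C : Type u} [Category.{v} C] {Z X Y P W V : C} {f : Z ⟶ X} {g : Z ⟶ Y}
  {inl : X ⟶ P} {inr : Y ⟶ P}

theorem desc_eq_desc_comp (hP : IsPushout f g inl inr) {a : X ⟶ W} {b : Y ⟶ W}
    (w : f ≫ a = g ≫ b) (k : W ⟶ V) {a' : X ⟶ V} {b' : Y ⟶ V} (ha : a' = a ≫ k)
    (hb : b' = b ≫ k) (w' : f ≫ a' = g ≫ b') :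
    hP.desc a' b' w' = hP.desc a b w ≫ k :=
  hP.hom_ext (by simp [ha]) (by simp [hb])

end CategoryTheory.IsPushout

theorem CategoryTheory.Limits.IsTerminal.whiskerLeft_eq_fst_comp_lift {C : Type u}
    [Category.{v} C] [CartesianMonoidalCategory C] {T Y : C} (t : IsTerminal T) (A : C)
    (k : T ⟶ Y) :
    A ◁ k = CartesianMonoidalCategory.fst A T ≫
      CartesianMonoidalCategory.lift (𝟙 A) (t.from A ≫ k) := by
  refine CartesianMonoidalCategory.hom_ext _ _ (by simp) ?_
  simp only [CartesianMonoidalCategory.whiskerLeft_snd, Category.assoc,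
    CartesianMonoidalCategory.lift_snd]
  rw [← Category.assoc, t.hom_ext (CartesianMonoidalCategory.snd A T)]

namespace CogroupoidInterval

open CartesianMonoidalCategory

variable {R : Type u} [Category.{v} R] [CartesianMonoidalCategory R] {I : CogroupoidInterval R}
  {A B : R}

theorem IsHtpy.invHtpy {H : A ⊗ I.I1 ⟶ B} {f g : A ⟶ B} (h : I.IsHtpy H f g) :
    I.IsHtpy (I.invHtpy H) g f := by
  constructor
  · rw [CogroupoidInterval.invHtpy, lift_whiskerLeft_assoc, Category.assoc, I.sigma_src, h.2]
  · rw [CogroupoidInterval.invHtpy, lift_whiskerLeft_assoc, Category.assoc, I.sigma_tgt, h.1]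

variable [MonoidalClosed R] (I)

theorem i1_desc_curry (H H' : A ⊗ I.I1 ⟶ B) (w : I.Matches H H') :
    I.i1 ≫ I.po.desc (curry H') (curry H) w = curry H' :=
  I.po.inl_desc _ _ w

theorem i0_desc_curry (H H' : A ⊗ I.I1 ⟶ B) (w : I.Matches H H') :
    I.i0 ≫ I.po.desc (curry H') (curry H) w = curry H :=
  I.po.inr_desc _ _ w

theorem curry_vcomp (H H' : A ⊗ I.I1 ⟶ B) (w : I.Matches H H') :
    curry (I.vcomp H H' w) = I.two ≫ I.po.desc (curry H') (curry H) w := by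
  rw [vcomp, curry_natural_left, curry_uncurry]

theorem curry_invHtpy (H : A ⊗ I.I1 ⟶ B) : curry (I.invHtpy H) = I.sigma ≫ curry H :=
  curry_natural_left _ _

theorem curry_idHtpy (f : A ⟶ B) : curry (I.idHtpy f) = I.star ≫ curry (fst A I.I0 ≫ f) := by
  rw [← curry_natural_left, idHtpy, whiskerLeft_fst_assoc]

variable {I}

theorem curry_fst_comp_of_lift_comp {H : A ⊗ I.I1 ⟶ B} {f : A ⟶ B} {k : I.I0 ⟶ I.I1}
    (hf : lift (𝟙 A) (I.isTerminal.from A ≫ k) ≫ H = f) :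
    curry (fst A I.I0 ≫ f) = k ≫ curry H := by
  rw [← curry_natural_left, I.isTerminal.whiskerLeft_eq_fst_comp_lift, Category.assoc, hf]

theorem IsHtpy.curry_src {H : A ⊗ I.I1 ⟶ B} {f g : A ⟶ B} (h : I.IsHtpy H f g) :
    curry (fst A I.I0 ≫ f) = I.src ≫ curry H :=
  curry_fst_comp_of_lift_comp h.1

theorem IsHtpy.curry_tgt {H : A ⊗ I.I1 ⟶ B} {f g : A ⟶ B} (h : I.IsHtpy H f g) :
    curry (fst A I.I0 ≫ g) = I.tgt ≫ curry H :=
  curry_fst_comp_of_lift_comp h.2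

theorem vcomp_assoc (H H' H'' : A ⊗ I.I1 ⟶ B) (w₁ : I.Matches H H')
    (w₂ : I.Matches (I.vcomp H H' w₁) H'') (w₃ : I.Matches H' H'')
    (w₄ : I.Matches H (I.vcomp H' H'' w₃)) :
    I.vcomp (I.vcomp H H' w₁) H'' w₂ = I.vcomp H (I.vcomp H' H'' w₃) w₄ := by
  have hK : I.i1 ≫ I.po.desc (curry H') (curry H) w₁ =
      I.i0 ≫ I.po.desc (curry H'') (curry H') w₃ := by
    rw [i1_desc_curry, i0_desc_curry]
  -- `K : I₃ → B^A` is the triple copairing `[curry H'', curry H', curry H]`.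
  let K := I.po2.desc _ _ hK
  have hL : I.po.desc (curry H'') (curry (I.vcomp H H' w₁)) w₂ =
      I.po.desc (I.i1 ≫ I.j1) (I.two ≫ I.j0) I.w_coassoc_r ≫ K :=
    I.po.desc_eq_desc_comp _ K
      (by simp only [K, Category.assoc, I.po2.inr_desc, i1_desc_curry])
      (by simp only [K, Category.assoc, I.po2.inl_desc, curry_vcomp]) _
  have hR : I.po.desc (curry (I.vcomp H' H'' w₃)) (curry H) w₄ =
      I.po.desc (I.two ≫ I.j1) (I.i0 ≫ I.j0) I.w_coassoc_l ≫ K :=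
    I.po.desc_eq_desc_comp _ K
      (by simp only [K, Category.assoc, I.po2.inr_desc, curry_vcomp])
      (by simp only [K, Category.assoc, I.po2.inl_desc, i0_desc_curry]) _
  apply curry_injective
  rw [curry_vcomp _ _ _ w₂, curry_vcomp _ _ _ w₄, hL, hR, ← Category.assoc, ← Category.assoc,
    I.coassoc]

theorem idHtpy_vcomp {H : A ⊗ I.I1 ⟶ B} {f g : A ⟶ B} (h : I.IsHtpy H f g)
    (w : I.Matches (I.idHtpy f) H) : I.vcomp (I.idHtpy f) H w = H := by
  have hdesc : I.po.desc (curry H) (curry (I.idHtpy f)) w =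
      I.po.desc (𝟙 I.I1) (I.star ≫ I.src) I.w_counit_l ≫ curry H :=
    I.po.desc_eq_desc_comp _ _ (Category.id_comp _).symm
      (by rw [curry_idHtpy, h.curry_src, Category.assoc]) _
  apply curry_injective
  rw [curry_vcomp, hdesc, ← Category.assoc, I.counit_l, Category.id_comp]

theorem vcomp_idHtpy {H : A ⊗ I.I1 ⟶ B} {f g : A ⟶ B} (h : I.IsHtpy H f g)
    (w : I.Matches H (I.idHtpy g)) : I.vcomp H (I.idHtpy g) w = H := by
  have hdesc : I.po.desc (curry (I.idHtpy g)) (curry H) w =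
      I.po.desc (I.star ≫ I.tgt) (𝟙 I.I1) I.w_counit_r ≫ curry H :=
    I.po.desc_eq_desc_comp _ _ (by rw [curry_idHtpy, h.curry_tgt, Category.assoc])
      (Category.id_comp _).symm _
  apply curry_injective
  rw [curry_vcomp, hdesc, ← Category.assoc, I.counit_r, Category.id_comp]

theorem vcomp_invHtpy {H : A ⊗ I.I1 ⟶ B} {f g : A ⟶ B} (h : I.IsHtpy H f g)
    (w : I.Matches H (I.invHtpy H)) : I.vcomp H (I.invHtpy H) w = I.idHtpy f := by
  have hdesc : I.po.desc (curry (I.invHtpy H)) (curry H) w =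
      I.po.desc I.sigma (𝟙 I.I1) I.w_coinv_r ≫ curry H :=
    I.po.desc_eq_desc_comp _ _ (curry_invHtpy _ _) (Category.id_comp _).symm _
  apply curry_injective
  rw [curry_vcomp, hdesc, ← Category.assoc, I.coinv_r, curry_idHtpy, h.curry_src,
    Category.assoc]

theorem invHtpy_vcomp {H : A ⊗ I.I1 ⟶ B} {f g : A ⟶ B} (h : I.IsHtpy H f g)
    (w : I.Matches (I.invHtpy H) H) : I.vcomp (I.invHtpy H) H w = I.idHtpy g := by
  have hdesc : I.po.desc (curry H) (curry (I.invHtpy H)) w =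
      I.po.desc (𝟙 I.I1) I.sigma I.w_coinv_l ≫ curry H :=
    I.po.desc_eq_desc_comp _ _ (Category.id_comp _).symm (curry_invHtpy _ _) _
  apply curry_injective
  rw [curry_vcomp, hdesc, ← Category.assoc, I.coinv_l, curry_idHtpy, h.curry_tgt,
    Category.assoc]

end CogroupoidInterval

open CogroupoidInterval in
/-- Let `R` be a cartesian closed category with an interval `I`.
Homotopies `H : A ⊗ I₁ ⟶ B`, together with vertical composition, the
identity homotopies `f ∘ π₁`, and the inverses `H ∘ (A × σ)`, form a
groupoid structure on the hom-set `R(A, B)`: vertical composition is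
associative, with identities and inverses as stated. -/
theorem homotopies_form_groupoid {R : Type u} [Category.{v} R]
    [CartesianMonoidalCategory R] [MonoidalClosed R]
    (I : CogroupoidInterval R) (A B : R) :
    -- associativity
    (∀ (f g h k : A ⟶ B) (H H' H'' : A ⊗ I.I1 ⟶ B),
      I.IsHtpy H f g → I.IsHtpy H' g h → I.IsHtpy H'' h k →
      ∀ (w₁ : I.Matches H H') (w₂ : I.Matches (I.vcomp H H' w₁) H'')
        (w₃ : I.Matches H' H'') (w₄ : I.Matches H (I.vcomp H' H'' w₃)),
        I.vcomp (I.vcomp H H' w₁) H'' w₂ = I.vcomp H (I.vcomp H' H'' w₃) w₄) ∧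
    -- identity laws
    (∀ (f g : A ⟶ B) (H : A ⊗ I.I1 ⟶ B), I.IsHtpy H f g →
      ∀ (w₁ : I.Matches (I.idHtpy f) H) (w₂ : I.Matches H (I.idHtpy g)),
        I.vcomp (I.idHtpy f) H w₁ = H ∧ I.vcomp H (I.idHtpy g) w₂ = H) ∧
    -- the inverse is a homotopy in the opposite direction and the
    -- inverse laws hold
    (∀ (f g : A ⟶ B) (H : A ⊗ I.I1 ⟶ B), I.IsHtpy H f g →
      I.IsHtpy (I.invHtpy H) g f ∧
      ∀ (w₁ : I.Matches H (I.invHtpy H)) (w₂ : I.Matches (I.invHtpy H) H),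
        I.vcomp H (I.invHtpy H) w₁ = I.idHtpy f ∧
        I.vcomp (I.invHtpy H) H w₂ = I.idHtpy g) := by
  refine ⟨fun _ _ _ _ H H' H'' _ _ _ => vcomp_assoc H H' H'',
    fun _ _ _ h _ _ => ⟨idHtpy_vcomp h _, vcomp_idHtpy h _⟩,
    fun _ _ _ h => ⟨h.invHtpy, fun _ _ => ⟨vcomp_invHtpy h _, invHtpy_vcomp h _⟩⟩⟩
end

section
/- Let R be a cartesian closed category with an interval I. For each object A of R, the data Π A with objects the maps I₀ → A, morphisms a → b the maps α : I₁ → A with α∘0 = a and α∘1 = b, composition β∘α := [β,α]∘2, identity at a given by a∘*, and inverse of α given by α∘σ, forms a groupoid (the fundamental groupoid of A). -/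
open CategoryTheory CategoryTheory.Limits

universe v u

variable {R : Type u} [Category.{v} R]

namespace CogroupoidInterval

variable (I : CogroupoidInterval R)

/-- A path in `A` from the point `a` to the point `b`: a morphism of the
fundamental groupoid `Π A`. -/
def PHom {A : R} (a b : I.I0 ⟶ A) : Type v :=
  {p : I.I1 ⟶ A // I.src ≫ p = a ∧ I.tgt ≫ p = b}

/-- The identity path `a∘*` at the point `a`. -/
def pid {A : R} (a : I.I0 ⟶ A) : I.PHom a a :=
  ⟨I.star ≫ a,
    by rw [← Category.assoc, I.star_src, Category.id_comp],
    by rw [← Category.assoc, I.star_tgt, Category.id_comp]⟩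

/-- Composition `β ∘ α := [β, α] ∘ 2` of paths in the fundamental
groupoid. -/
noncomputable def pcomp {A : R} {a b c : I.I0 ⟶ A} (p : I.PHom a b) (q : I.PHom b c) :
    I.PHom a c :=
  ⟨I.two ≫ I.po.desc q.1 p.1 (by rw [q.2.1, p.2.2]),
    by rw [← Category.assoc, I.two_src, Category.assoc, I.po.inr_desc, p.2.1],
    by rw [← Category.assoc, I.two_tgt, Category.assoc, I.po.inl_desc, q.2.2]⟩

/-- The inverse `α ∘ σ` of a path. -/
def pinv {A : R} {a b : I.I0 ⟶ A} (p : I.PHom a b) : I.PHom b a :=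
  ⟨I.sigma ≫ p.1,
    by rw [← Category.assoc, I.sigma_src, p.2.2],
    by rw [← Category.assoc, I.sigma_tgt, p.2.1]⟩

end CogroupoidInterval

/-! Each groupoid law for paths is the image of the corresponding cogroupoid axiom of the
interval under a map out of `I₁` (or, for associativity, out of `I₃`) built from the paths
involved: precomposing a copairing `[β, α] : I₂ ⟶ A` with `2` commutes with postcomposing
by such a map, since maps out of a pushout are determined by their two restrictions. -/

namespace CategoryTheory.IsPushout

variable {C : Type*} [Category C] {Z X Y P : C} {f : Z ⟶ X} {g : Z ⟶ Y} {inl : X ⟶ P}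
  {inr : Y ⟶ P}

theorem desc_eq_desc_comp_s8 (hP : IsPushout f g inl inr) {W V : C} {h : X ⟶ W} {k : Y ⟶ W}
    (w : f ≫ h = g ≫ k) (m : W ⟶ V) {h' : X ⟶ V} {k' : Y ⟶ V} (hh : h ≫ m = h')
    (hk : k ≫ m = k') :
    hP.desc h' k' (by rw [← hh, ← hk, reassoc_of% w]) = hP.desc h k w ≫ m :=
  hP.hom_ext (by simp [hh]) (by simp [hk])

end CategoryTheory.IsPushout

namespace CogroupoidInterval

variable {I : CogroupoidInterval R} {A : R}

theorem pid_pcomp {a b : I.I0 ⟶ A} (p : I.PHom a b) : I.pcomp (I.pid a) p = p :=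
  Subtype.ext <| by
    change I.two ≫ I.po.desc p.1 (I.star ≫ a) _ = p.1
    rw [I.po.desc_eq_desc_comp_s8 I.w_counit_l p.1 (h' := p.1) (k' := I.star ≫ a)
        (Category.id_comp _) (by rw [Category.assoc, p.2.1]),
      reassoc_of% I.counit_l]

theorem pcomp_pid {a b : I.I0 ⟶ A} (p : I.PHom a b) : I.pcomp p (I.pid b) = p :=
  Subtype.ext <| by
    change I.two ≫ I.po.desc (I.star ≫ b) p.1 _ = p.1
    rw [I.po.desc_eq_desc_comp_s8 I.w_counit_r p.1 (h' := I.star ≫ b) (k' := p.1)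
        (by rw [Category.assoc, p.2.2]) (Category.id_comp _),
      reassoc_of% I.counit_r]

theorem pcomp_pinv {a b : I.I0 ⟶ A} (p : I.PHom a b) : I.pcomp p (I.pinv p) = I.pid a :=
  Subtype.ext <| by
    change I.two ≫ I.po.desc (I.sigma ≫ p.1) p.1 _ = I.star ≫ a
    rw [I.po.desc_eq_desc_comp_s8 I.w_coinv_r p.1 (h' := I.sigma ≫ p.1) (k' := p.1) rfl
        (Category.id_comp _),
      reassoc_of% I.coinv_r, p.2.1]

theorem pinv_pcomp {a b : I.I0 ⟶ A} (p : I.PHom a b) : I.pcomp (I.pinv p) p = I.pid b :=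
  Subtype.ext <| by
    change I.two ≫ I.po.desc p.1 (I.sigma ≫ p.1) _ = I.star ≫ b
    rw [I.po.desc_eq_desc_comp_s8 I.w_coinv_l p.1 (h' := p.1) (k' := I.sigma ≫ p.1)
        (Category.id_comp _) rfl,
      reassoc_of% I.coinv_l, p.2.2]

theorem pcomp_assoc {a b c d : I.I0 ⟶ A} (p : I.PHom a b) (q : I.PHom b c)
    (r : I.PHom c d) : I.pcomp (I.pcomp p q) r = I.pcomp p (I.pcomp q r) :=
  Subtype.ext <| by
    let F : I.I3 ⟶ A := I.po2.desc (I.po.desc q.1 p.1 (by rw [q.2.1, p.2.2]))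
      (I.po.desc r.1 q.1 (by rw [r.2.1, q.2.2])) (by simp)
    change I.two ≫ I.po.desc r.1 (I.two ≫ I.po.desc q.1 p.1 _) _ =
      I.two ≫ I.po.desc (I.two ≫ I.po.desc r.1 q.1 _) p.1 _
    rw [I.po.desc_eq_desc_comp_s8 I.w_coassoc_r F (h' := r.1)
        (k' := I.two ≫ I.po.desc q.1 p.1 (by rw [q.2.1, p.2.2])) (by simp [F]) (by simp [F]),
      I.po.desc_eq_desc_comp_s8 I.w_coassoc_l F
        (h' := I.two ≫ I.po.desc r.1 q.1 (by rw [r.2.1, q.2.2])) (k' := p.1)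
        (by simp [F]) (by simp [F]),
      reassoc_of% I.coassoc]

end CogroupoidInterval

theorem fundamental_groupoid_is_groupoid_general
    (I : CogroupoidInterval R) (A : R) :
    (∀ (a b c d : I.I0 ⟶ A) (p : I.PHom a b) (q : I.PHom b c)
      (r : I.PHom c d),
      I.pcomp (I.pcomp p q) r = I.pcomp p (I.pcomp q r)) ∧
    (∀ (a b : I.I0 ⟶ A) (p : I.PHom a b),
      I.pcomp (I.pid a) p = p ∧ I.pcomp p (I.pid b) = p) ∧
    (∀ (a b : I.I0 ⟶ A) (p : I.PHom a b),
      I.pcomp p (I.pinv p) = I.pid a ∧ I.pcomp (I.pinv p) p = I.pid b) :=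
  ⟨fun _ _ _ _ => CogroupoidInterval.pcomp_assoc,
    fun _ _ p => ⟨CogroupoidInterval.pid_pcomp p, CogroupoidInterval.pcomp_pid p⟩,
    fun _ _ p => ⟨CogroupoidInterval.pcomp_pinv p, CogroupoidInterval.pinv_pcomp p⟩⟩

/-- **The fundamental groupoid.**  Let `R` be a cartesian closed category
with an interval `I`.  For each object `A` of `R`, the points `I₀ ⟶ A`,
with morphisms `a → b` the paths `α : I₁ ⟶ A` such that `α∘0 = a` and
`α∘1 = b`, composition `β ∘ α := [β,α] ∘ 2`, identities `a∘*` and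
inverses `α∘σ`, form a groupoid `Π A`. -/
theorem fundamental_groupoid_is_groupoid
    [CartesianMonoidalCategory R] [MonoidalClosed R] (I : CogroupoidInterval R) (A : R) :
    (∀ (a b c d : I.I0 ⟶ A) (p : I.PHom a b) (q : I.PHom b c)
      (r : I.PHom c d),
      I.pcomp (I.pcomp p q) r = I.pcomp p (I.pcomp q r)) ∧
    (∀ (a b : I.I0 ⟶ A) (p : I.PHom a b),
      I.pcomp (I.pid a) p = p ∧ I.pcomp p (I.pid b) = p) ∧
    (∀ (a b : I.I0 ⟶ A) (p : I.PHom a b),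
      I.pcomp p (I.pinv p) = I.pid a ∧ I.pcomp (I.pinv p) p = I.pid b) :=
  fundamental_groupoid_is_groupoid_general I A
end

section
/- Let R be a cartesian closed category with an interval I. The assignment A ↦ Π A, with Π(f) for f : A → B given by post-composition with f on both points and paths, defines a functor Π : R → Gpd from R to groupoids; functoriality uses that f∘[β,α] = [f∘β, f∘α] by the universal property of the pushout defining I₂. -/
open CategoryTheory CategoryTheory.Limits

universe v u

namespace CogroupoidInterval

variable {R : Type u} [Category.{v} R] (I : CogroupoidInterval R)

/-- The action of `Π(f)` on points: post-composition with `f`. -/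
def pmapObj {A B : R} (f : A ⟶ B) (a : I.I0 ⟶ A) : I.I0 ⟶ B := a ≫ f

/-- The action of `Π(f)` on paths: post-composition with `f`. -/
def pmap {A B : R} (f : A ⟶ B) {a b : I.I0 ⟶ A} (p : I.PHom a b) :
    I.PHom (a ≫ f) (b ≫ f) :=
  ⟨p.1 ≫ f,
    by rw [← Category.assoc, p.2.1],
    by rw [← Category.assoc, p.2.2]⟩

end CogroupoidInterval

namespace CogroupoidInterval

variable {R : Type u} [Category.{v} R] (I : CogroupoidInterval R)

theorem PHom.ext {A : R} {a b : I.I0 ⟶ A} {p q : I.PHom a b} (h : p.1 = q.1) : p = q :=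
  Subtype.ext h

theorem PHom.heq_of_val_eq {A : R} {a b a' b' : I.I0 ⟶ A} (ha : a = a') (hb : b = b')
    {p : I.PHom a b} {q : I.PHom a' b'} (h : p.1 = q.1) : p ≍ q := by
  subst ha hb
  exact heq_of_eq (PHom.ext I h)

theorem pmap_pid {A B : R} (f : A ⟶ B) (a : I.I0 ⟶ A) : I.pmap f (I.pid a) = I.pid (a ≫ f) :=
  PHom.ext I (Category.assoc _ _ _)

theorem desc_comp {A B : R} (f : A ⟶ B) (g h : I.I1 ⟶ A) (w : I.src ≫ g = I.tgt ≫ h)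
    (w' : I.src ≫ (g ≫ f) = I.tgt ≫ (h ≫ f)) :
    I.po.desc g h w ≫ f = I.po.desc (g ≫ f) (h ≫ f) w' := by
  apply I.po.hom_ext <;> simp

theorem pmap_pcomp {A B : R} (f : A ⟶ B) {a b c : I.I0 ⟶ A} (p : I.PHom a b)
    (q : I.PHom b c) : I.pmap f (I.pcomp p q) = I.pcomp (I.pmap f p) (I.pmap f q) :=
  PHom.ext I <| by
    simp only [pmap, pcomp, Category.assoc]
    rw [desc_comp]

theorem pmap_id_heq {A : R} {a b : I.I0 ⟶ A} (p : I.PHom a b) : I.pmap (𝟙 A) p ≍ p :=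
  PHom.heq_of_val_eq I (Category.comp_id a) (Category.comp_id b) (Category.comp_id p.1)

theorem pmap_comp_heq {A B C : R} (f : A ⟶ B) (g : B ⟶ C) {a b : I.I0 ⟶ A}
    (p : I.PHom a b) : I.pmap (f ≫ g) p ≍ I.pmap g (I.pmap f p) :=
  PHom.heq_of_val_eq I (Category.assoc a f g).symm (Category.assoc b f g).symm
    (Category.assoc p.1 f g).symm

end CogroupoidInterval

open CogroupoidInterval in
theorem fundamental_groupoid_functorial_general {R : Type u} [Category.{v} R]
    (I : CogroupoidInterval R) :
    -- `Π(f)` is a functor: it preserves identity paths …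
    (∀ (A B : R) (f : A ⟶ B) (a : I.I0 ⟶ A),
      I.pmap f (I.pid a) = I.pid (a ≫ f)) ∧
    -- … and composition of paths, via `f ∘ [β,α] = [f∘β, f∘α]`
    (∀ (A B : R) (f : A ⟶ B) (a b c : I.I0 ⟶ A) (p : I.PHom a b)
      (q : I.PHom b c)
      (w : I.src ≫ q.1 = I.tgt ≫ p.1)
      (w' : I.src ≫ (q.1 ≫ f) = I.tgt ≫ (p.1 ≫ f)),
      I.po.desc q.1 p.1 w ≫ f = I.po.desc (q.1 ≫ f) (p.1 ≫ f) w' ∧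
      I.pmap f (I.pcomp p q) = I.pcomp (I.pmap f p) (I.pmap f q)) ∧
    -- `Π` itself is functorial: it preserves identities …
    (∀ (A : R) (a b : I.I0 ⟶ A) (p : I.PHom a b),
      a ≫ 𝟙 A = a ∧ HEq (I.pmap (𝟙 A) p) p) ∧
    -- … and composition
    (∀ (A B C : R) (f : A ⟶ B) (g : B ⟶ C) (a b : I.I0 ⟶ A)
      (p : I.PHom a b),
      a ≫ (f ≫ g) = (a ≫ f) ≫ g ∧
      HEq (I.pmap (f ≫ g) p) (I.pmap g (I.pmap f p))) :=
  ⟨fun _ _ f a => pmap_pid I f a,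
    fun _ _ f _ _ _ p q w w' => ⟨desc_comp I f q.1 p.1 w w', pmap_pcomp I f p q⟩,
    fun _ a _ p => ⟨Category.comp_id a, pmap_id_heq I p⟩,
    fun _ _ _ f g a _ p => ⟨(Category.assoc a f g).symm, pmap_comp_heq I f g p⟩⟩

open CogroupoidInterval in
/-- Let `R` be a cartesian closed category with an interval `I`.  The
assignment `A ↦ Π A`, with `Π(f)` given by post-composition with
`f : A ⟶ B` on both points and paths, defines a functor `Π : R → Gpd`:
each `Π(f)` preserves identity paths and composition of paths (the latter
because `f ∘ [β,α] = [f∘β, f∘α]`, by the universal property of the pushout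
defining `I₂`), `Π` preserves identities and composition of morphisms of
`R`. -/
theorem fundamental_groupoid_functorial {R : Type u} [Category.{v} R]
    [CartesianMonoidalCategory R] [MonoidalClosed R] (I : CogroupoidInterval R) :
    -- `Π(f)` is a functor: it preserves identity paths …
    (∀ (A B : R) (f : A ⟶ B) (a : I.I0 ⟶ A),
      I.pmap f (I.pid a) = I.pid (a ≫ f)) ∧
    -- … and composition of paths, via `f ∘ [β,α] = [f∘β, f∘α]`
    (∀ (A B : R) (f : A ⟶ B) (a b c : I.I0 ⟶ A) (p : I.PHom a b)
      (q : I.PHom b c)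
      (w : I.src ≫ q.1 = I.tgt ≫ p.1)
      (w' : I.src ≫ (q.1 ≫ f) = I.tgt ≫ (p.1 ≫ f)),
      I.po.desc q.1 p.1 w ≫ f = I.po.desc (q.1 ≫ f) (p.1 ≫ f) w' ∧
      I.pmap f (I.pcomp p q) = I.pcomp (I.pmap f p) (I.pmap f q)) ∧
    -- `Π` itself is functorial: it preserves identities …
    (∀ (A : R) (a b : I.I0 ⟶ A) (p : I.PHom a b),
      a ≫ 𝟙 A = a ∧ HEq (I.pmap (𝟙 A) p) p) ∧
    -- … and composition
    (∀ (A B C : R) (f : A ⟶ B) (g : B ⟶ C) (a b : I.I0 ⟶ A)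
      (p : I.PHom a b),
      a ≫ (f ≫ g) = (a ≫ f) ≫ g ∧
      HEq (I.pmap (f ≫ g) p) (I.pmap g (I.pmap f p))) :=
  fundamental_groupoid_functorial_general I
end

section
/- Let R be a cartesian closed category with interval I, let H : A × I₁ → B be a homotopy from f to g, and let α : a → b be a path in the fundamental groupoid Π A. Then in Π B the diagonal path H∘⟨α, id_{I₁}⟩ : Π(f)(a) → Π(g)(b) equals the composite (H∘⟨α, 1∘*⟩) ∘ (H∘⟨α∘0∘*, id_{I₁}⟩) and also equals (H∘⟨α∘1∘*, id_{I₁}⟩) ∘ (H∘⟨α, 0∘*⟩); i.e., the naturality square with diagonal commutes. -/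
open CategoryTheory CategoryTheory.Limits CategoryTheory.MonoidalCategory

universe v u

/-! The diagonal path `H ∘ ⟨α, id⟩` is the image of the diagonal `Δ : I₁ ⟶ I₁ × I₁` under
`H ∘ (α × id)`. By the counit laws of the cogroupoid `I`, `Δ` is the composite of the path
`⟨0∘*, id⟩` followed by `⟨id, 1∘*⟩`, and also of `⟨id, 0∘*⟩` followed by `⟨1∘*, id⟩`; path
composition commutes with postcomposition, so the images of these factorisations are the two sides
of the square. -/

namespace CogroupoidInterval

variable {R : Type u} [Category.{v} R] (I : CogroupoidInterval R)

lemma desc_comp_s10 {X Y : R} (u v : I.I1 ⟶ X) (w : I.src ≫ u = I.tgt ≫ v) (k : X ⟶ Y) :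
    I.po.desc u v w ≫ k = I.po.desc (u ≫ k) (v ≫ k) (by rw [reassoc_of% w]) := by
  apply I.po.hom_ext <;> simp

open CartesianMonoidalCategory

variable [CartesianMonoidalCategory R]

lemma two_desc_lift {X Y : R} (u₁ v₁ : I.I1 ⟶ X) (u₂ v₂ : I.I1 ⟶ Y)
    (w₁ : I.src ≫ u₁ = I.tgt ≫ v₁) (w₂ : I.src ≫ u₂ = I.tgt ≫ v₂)
    (w : I.src ≫ lift u₁ u₂ = I.tgt ≫ lift v₁ v₂) :
    I.two ≫ I.po.desc (lift u₁ u₂) (lift v₁ v₂) w =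
      lift (I.two ≫ I.po.desc u₁ v₁ w₁) (I.two ≫ I.po.desc u₂ v₂ w₂) := by
  apply CartesianMonoidalCategory.hom_ext <;> simp [desc_comp_s10]

lemma lift_id_id_eq_two_desc_top_right :
    lift (𝟙 I.I1) (𝟙 I.I1) =
      I.two ≫ I.po.desc (lift (𝟙 I.I1) (I.star ≫ I.tgt)) (lift (I.star ≫ I.src) (𝟙 I.I1))
        (by ext <;> simp [reassoc_of% I.star_src, reassoc_of% I.star_tgt]) := by
  rw [I.two_desc_lift _ _ _ _ I.w_counit_l I.w_counit_r, I.counit_l, I.counit_r]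

lemma lift_id_id_eq_two_desc_left_bottom :
    lift (𝟙 I.I1) (𝟙 I.I1) =
      I.two ≫ I.po.desc (lift (I.star ≫ I.tgt) (𝟙 I.I1)) (lift (𝟙 I.I1) (I.star ≫ I.src))
        (by ext <;> simp [reassoc_of% I.star_src, reassoc_of% I.star_tgt]) := by
  rw [I.two_desc_lift _ _ _ _ I.w_counit_r I.w_counit_l, I.counit_l, I.counit_r]

end CogroupoidInterval

open CogroupoidInterval CartesianMonoidalCategory in
theorem homotopy_naturality_square_with_diagonal_general
    {R : Type u} [Category.{v} R] [CartesianMonoidalCategory R]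
    (I : CogroupoidInterval R)
    {A B : R} (f g : A ⟶ B) (H : A ⊗ I.I1 ⟶ B)
    -- `α` is a path from `a` to `b` in `Π A`
    (a b : I.I0 ⟶ A) (α : I.I1 ⟶ A)
    -- the five paths in `Π B` (with their endpoints):
    -- the diagonal `H ∘ ⟨α, id⟩ : Π(f)(a) → Π(g)(b)`
    (hd0 : I.src ≫ (lift α (𝟙 I.I1) ≫ H) = a ≫ f)
    (hd1 : I.tgt ≫ (lift α (𝟙 I.I1) ≫ H) = b ≫ g)
    -- the top edge `H ∘ ⟨α∘0∘*, id⟩ : Π(f)(a) → Π(g)(a)`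
    (ht0 : I.src ≫ (lift (I.star ≫ I.src ≫ α) (𝟙 I.I1) ≫ H) = a ≫ f)
    (ht1 : I.tgt ≫ (lift (I.star ≫ I.src ≫ α) (𝟙 I.I1) ≫ H) = a ≫ g)
    -- the right edge `H ∘ ⟨α, 1∘*⟩ : Π(g)(a) → Π(g)(b)`
    (hr0 : I.src ≫ (lift α (I.star ≫ I.tgt) ≫ H) = a ≫ g)
    (hr1 : I.tgt ≫ (lift α (I.star ≫ I.tgt) ≫ H) = b ≫ g)
    -- the left edge `H ∘ ⟨α, 0∘*⟩ : Π(f)(a) → Π(f)(b)`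
    (hl0 : I.src ≫ (lift α (I.star ≫ I.src) ≫ H) = a ≫ f)
    (hl1 : I.tgt ≫ (lift α (I.star ≫ I.src) ≫ H) = b ≫ f)
    -- the bottom edge `H ∘ ⟨α∘1∘*, id⟩ : Π(f)(b) → Π(g)(b)`
    (hb0 : I.src ≫ (lift (I.star ≫ I.tgt ≫ α) (𝟙 I.I1) ≫ H) = b ≫ f)
    (hb1 : I.tgt ≫ (lift (I.star ≫ I.tgt ≫ α) (𝟙 I.I1) ≫ H) = b ≫ g) :
    -- the diagonal is the composite of the top and right edges …
    (⟨lift α (𝟙 I.I1) ≫ H, hd0, hd1⟩ : I.PHom (a ≫ f) (b ≫ g)) =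
      I.pcomp (⟨lift (I.star ≫ I.src ≫ α) (𝟙 I.I1) ≫ H, ht0, ht1⟩ :
          I.PHom (a ≫ f) (a ≫ g))
        (⟨lift α (I.star ≫ I.tgt) ≫ H, hr0, hr1⟩ :
          I.PHom (a ≫ g) (b ≫ g)) ∧
    -- … and also the composite of the left and bottom edges
    (⟨lift α (𝟙 I.I1) ≫ H, hd0, hd1⟩ : I.PHom (a ≫ f) (b ≫ g)) =
      I.pcomp (⟨lift α (I.star ≫ I.src) ≫ H, hl0, hl1⟩ :
          I.PHom (a ≫ f) (b ≫ f))
        (⟨lift (I.star ≫ I.tgt ≫ α) (𝟙 I.I1) ≫ H, hb0, hb1⟩ :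
          I.PHom (b ≫ f) (b ≫ g)) := by
  have hdiag : lift α (𝟙 I.I1) ≫ H = lift (𝟙 I.I1) (𝟙 I.I1) ≫ (α ⊗ₘ 𝟙 I.I1) ≫ H := by
    simp
  refine ⟨Subtype.ext ?_, Subtype.ext ?_⟩
  · dsimp only [pcomp]
    rw [hdiag, I.lift_id_id_eq_two_desc_top_right]
    simp [desc_comp_s10]
  · dsimp only [pcomp]
    rw [hdiag, I.lift_id_id_eq_two_desc_left_bottom]
    simp [desc_comp_s10]

open CogroupoidInterval CartesianMonoidalCategory in
/-- Let `R` be a cartesian closed category with interval `I`, let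
`H : A ⊗ I₁ ⟶ B` be a homotopy from `f` to `g`, and let `α : a → b` be a
path in the fundamental groupoid `Π A`.  Then in `Π B` the diagonal path
`H ∘ ⟨α, id⟩ : Π(f)(a) → Π(g)(b)` equals the composite
`(H ∘ ⟨α, 1∘*⟩) ∘ (H ∘ ⟨α∘0∘*, id⟩)` and also equals
`(H ∘ ⟨α∘1∘*, id⟩) ∘ (H ∘ ⟨α, 0∘*⟩)`: the naturality square together with
its diagonal commutes. -/
theorem homotopy_naturality_square_with_diagonal
    {R : Type u} [Category.{v} R] [CartesianMonoidalCategory R]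
    [MonoidalClosed R] (I : CogroupoidInterval R)
    {A B : R} (f g : A ⟶ B) (H : A ⊗ I.I1 ⟶ B)
    -- `H` is a homotopy from `f` to `g`
    (hH0 : lift (𝟙 A) (I.isTerminal.from A ≫ I.src) ≫ H = f)
    (hH1 : lift (𝟙 A) (I.isTerminal.from A ≫ I.tgt) ≫ H = g)
    -- `α` is a path from `a` to `b` in `Π A`
    (a b : I.I0 ⟶ A) (α : I.I1 ⟶ A)
    (hα0 : I.src ≫ α = a) (hα1 : I.tgt ≫ α = b)
    -- the five paths in `Π B` (with their endpoints):
    -- the diagonal `H ∘ ⟨α, id⟩ : Π(f)(a) → Π(g)(b)`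
    (hd0 : I.src ≫ (lift α (𝟙 I.I1) ≫ H) = a ≫ f)
    (hd1 : I.tgt ≫ (lift α (𝟙 I.I1) ≫ H) = b ≫ g)
    -- the top edge `H ∘ ⟨α∘0∘*, id⟩ : Π(f)(a) → Π(g)(a)`
    (ht0 : I.src ≫ (lift (I.star ≫ I.src ≫ α) (𝟙 I.I1) ≫ H) = a ≫ f)
    (ht1 : I.tgt ≫ (lift (I.star ≫ I.src ≫ α) (𝟙 I.I1) ≫ H) = a ≫ g)
    -- the right edge `H ∘ ⟨α, 1∘*⟩ : Π(g)(a) → Π(g)(b)`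
    (hr0 : I.src ≫ (lift α (I.star ≫ I.tgt) ≫ H) = a ≫ g)
    (hr1 : I.tgt ≫ (lift α (I.star ≫ I.tgt) ≫ H) = b ≫ g)
    -- the left edge `H ∘ ⟨α, 0∘*⟩ : Π(f)(a) → Π(f)(b)`
    (hl0 : I.src ≫ (lift α (I.star ≫ I.src) ≫ H) = a ≫ f)
    (hl1 : I.tgt ≫ (lift α (I.star ≫ I.src) ≫ H) = b ≫ f)
    -- the bottom edge `H ∘ ⟨α∘1∘*, id⟩ : Π(f)(b) → Π(g)(b)`
    (hb0 : I.src ≫ (lift (I.star ≫ I.tgt ≫ α) (𝟙 I.I1) ≫ H) = b ≫ f)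
    (hb1 : I.tgt ≫ (lift (I.star ≫ I.tgt ≫ α) (𝟙 I.I1) ≫ H) = b ≫ g) :
    -- the diagonal is the composite of the top and right edges …
    (⟨lift α (𝟙 I.I1) ≫ H, hd0, hd1⟩ : I.PHom (a ≫ f) (b ≫ g)) =
      I.pcomp (⟨lift (I.star ≫ I.src ≫ α) (𝟙 I.I1) ≫ H, ht0, ht1⟩ :
          I.PHom (a ≫ f) (a ≫ g))
        (⟨lift α (I.star ≫ I.tgt) ≫ H, hr0, hr1⟩ :
          I.PHom (a ≫ g) (b ≫ g)) ∧
    -- … and also the composite of the left and bottom edges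
    (⟨lift α (𝟙 I.I1) ≫ H, hd0, hd1⟩ : I.PHom (a ≫ f) (b ≫ g)) =
      I.pcomp (⟨lift α (I.star ≫ I.src) ≫ H, hl0, hl1⟩ :
          I.PHom (a ≫ f) (b ≫ f))
        (⟨lift (I.star ≫ I.tgt ≫ α) (𝟙 I.I1) ≫ H, hb0, hb1⟩ :
          I.PHom (b ≫ f) (b ≫ g)) :=
  homotopy_naturality_square_with_diagonal_general I f g H a b α hd0 hd1 ht0 ht1 hr0 hr1 hl0 hl1 hb0
    hb1
end
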